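/- arXiv:2504.11198 — 2 statements merged into one kernel-verified Lean document; each statement's English description precedes it below -/
import Mathlib

section
/- Define p_{y,x}(n) = (1/A(y,x)) ∑_{j=0}^{n-1} |∑_{y ≤ k ≤ x} a_k² cos(2π j_k · j/n)| where A(y,x) = ∑_{y ≤ k ≤ x} a_k² > 0, (j_k) distinct positive integers. Then p_{y,x}(n) ≤ (1/A(y,x))·( n·(∑_{y ≤ k ≤ x} a_k⁴)^{1/2} + 2π ∑_{y ≤ k ≤ x} j_k a_k² ). -/
/-!
Put `f u = ∑ₖ aₖ² cos (2π jₖ u)`. The sum over `j` is a left Riemann sum of `|f|` at mesh `1/n`,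
and `|f|` is Lipschitz with constant `2π ∑ₖ jₖ aₖ²`, so the sum exceeds `n ∫₀¹ |f|` by at most
that constant. By Cauchy–Schwarz `∫₀¹ |f| ≤ (∫₀¹ f²)^{1/2}`, and since the `cos (2π jₖ u)` with
distinct positive `jₖ` are orthogonal on `[0, 1]`, `∫₀¹ f² = ½ ∑ₖ aₖ⁴`.
-/

open Real Finset
open scoped NNReal

lemma mul_le_integral_add_of_lipschitzWith {g : ℝ → ℝ} {K : ℝ≥0} (hg : LipschitzWith K g)
    {a b : ℝ} (hab : a ≤ b) : (b - a) * g a ≤ (∫ u in a..b, g u) + K * (b - a) ^ 2 := by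
  have hpt : ∀ u ∈ Set.Icc a b, g a - K * (b - a) ≤ g u := fun u hu => by
    have hdist : |g a - g u| ≤ K * |a - u| := by
      simpa [Real.dist_eq] using hg.dist_le_mul a u
    have hau : |a - u| ≤ b - a := by
      rw [abs_sub_comm, abs_of_nonneg (by linarith [hu.1])]
      linarith [hu.2]
    nlinarith [le_abs_self (g a - g u), mul_le_mul_of_nonneg_left hau K.coe_nonneg]
  have hint := intervalIntegral.integral_mono_on (μ := MeasureTheory.volume) hab
    (continuous_const.intervalIntegrable a b) (hg.continuous.intervalIntegrable a b) hpt
  rw [intervalIntegral.integral_const, smul_eq_mul] at hint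
  nlinarith

lemma sum_le_mul_integral_add_of_lipschitzWith {g : ℝ → ℝ} {K : ℝ≥0} (hg : LipschitzWith K g)
    (n : ℕ) : ∑ j ∈ range n, g (j / n) ≤ n * (∫ u in (0:ℝ)..1, g u) + K := by
  rcases n.eq_zero_or_pos with rfl | hn
  · simp
  have hn' : (0 : ℝ) < n := by exact_mod_cast hn
  have hcell : ∀ j : ℕ,
      g (j / n) ≤ n * (∫ u in (j / n : ℝ)..((j + 1) / n), g u) + K / n := by
    intro j
    have h := mul_le_integral_add_of_lipschitzWith hg (a := j / n) (b := (j + 1) / n)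
      (by gcongr; linarith)
    rw [show ((j : ℝ) + 1) / n - j / n = 1 / n by ring] at h
    have h' := mul_le_mul_of_nonneg_left h hn'.le
    field_simp at h' ⊢
    linarith
  have hsum : ∑ j ∈ range n, (∫ u in (j / n : ℝ)..((j + 1) / n), g u) =
      ∫ u in (0:ℝ)..1, g u := by
    have h := intervalIntegral.sum_integral_adjacent_intervals (a := fun j : ℕ => (j : ℝ) / n)
      (μ := MeasureTheory.volume) (n := n) (fun k _ => hg.continuous.intervalIntegrable _ _)
    simpa only [Nat.cast_zero, zero_div, div_self hn'.ne', Nat.cast_succ] using h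
  calc ∑ j ∈ range n, g (j / n)
      ≤ ∑ j ∈ range n, (n * (∫ u in (j / n : ℝ)..((j + 1) / n), g u) + K / n) :=
        sum_le_sum fun j _ => hcell j
    _ = n * (∫ u in (0:ℝ)..1, g u) + K := by
        rw [sum_add_distrib, ← mul_sum, hsum, sum_const, card_range, nsmul_eq_mul,
          mul_div_cancel₀ _ hn'.ne']

lemma lipschitzWith_sum_mul_cos {ι : Type*} (s : Finset ι) (c ω : ι → ℝ) :
    LipschitzWith (∑ k ∈ s, ‖c k‖₊ * ‖ω k‖₊) fun u => ∑ k ∈ s, c k * cos (ω k * u) := by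
  classical
  induction s using Finset.induction_on with
  | empty => simp
  | insert k s hk ih =>
    simp only [sum_insert hk]
    have hterm : LipschitzWith (‖c k‖₊ * ‖ω k‖₊) fun u => c k * cos (ω k * u) := by
      have h := (lipschitzWith_smul (c k)).comp
        (lipschitzWith_cos.comp (lipschitzWith_smul (ω k)))
      rw [one_mul] at h
      exact h
    exact hterm.add ih

lemma integral_abs_le_sqrt_integral_sq {f : ℝ → ℝ} (hf : Continuous f) :
    ∫ u in (0:ℝ)..1, |f u| ≤ √(∫ u in (0:ℝ)..1, f u ^ 2) := by
  set I := ∫ u in (0:ℝ)..1, |f u|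
  have hexp : ∀ u, (|f u| - I) ^ 2 = f u ^ 2 - 2 * I * |f u| + I ^ 2 := fun u => by
    rw [sub_sq, sq_abs]; ring
  -- the variance of `|f|` is nonnegative
  have hvar : ∫ u in (0:ℝ)..1, (|f u| - I) ^ 2 = (∫ u in (0:ℝ)..1, f u ^ 2) - I ^ 2 := by
    simp only [hexp]
    rw [intervalIntegral.integral_add (Continuous.intervalIntegrable (by fun_prop) _ _) (by simp),
      intervalIntegral.integral_sub (Continuous.intervalIntegrable (by fun_prop) _ _)
        (Continuous.intervalIntegrable (by fun_prop) _ _),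
      intervalIntegral.integral_const_mul, intervalIntegral.integral_const]
    simp only [sub_zero, one_smul]
    ring
  have hnonneg : 0 ≤ ∫ u in (0:ℝ)..1, (|f u| - I) ^ 2 :=
    intervalIntegral.integral_nonneg zero_le_one fun u _ => sq_nonneg _
  exact Real.le_sqrt_of_sq_le (by linarith)

lemma integral_cos_two_pi_int_mul (m : ℤ) :
    ∫ u in (0:ℝ)..1, cos (2 * π * m * u) = if m = 0 then 1 else 0 := by
  split_ifs with hm
  · simp [hm]
  have hc : 2 * π * m ≠ 0 := by positivity
  rw [intervalIntegral.integral_comp_mul_left cos hc, mul_zero, mul_one, integral_cos,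
    sin_zero, sub_zero, show 2 * π * m = ((2 * m : ℤ) : ℝ) * π by push_cast; ring,
    sin_int_mul_pi, smul_zero]

lemma integral_cos_mul_cos_two_pi_nat_mul {m m' : ℕ} (hm : 0 < m) (hm' : 0 < m') :
    ∫ u in (0:ℝ)..1, cos (2 * π * m * u) * cos (2 * π * m' * u) =
      if m = m' then 1 / 2 else 0 := by
  have hprod : ∀ u : ℝ, cos (2 * π * m * u) * cos (2 * π * m' * u) =
      (cos (2 * π * ((m - m' : ℤ) : ℝ) * u) + cos (2 * π * ((m + m' : ℤ) : ℝ) * u)) / 2 := by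
    intro u
    push_cast
    rw [show 2 * π * (m - m' : ℝ) * u = 2 * π * m * u - 2 * π * m' * u by ring,
      show 2 * π * (m + m' : ℝ) * u = 2 * π * m * u + 2 * π * m' * u by ring,
      ← two_mul_cos_mul_cos]
    ring
  simp only [hprod]
  rw [intervalIntegral.integral_div,
    intervalIntegral.integral_add (Continuous.intervalIntegrable (by fun_prop) _ _)
      (Continuous.intervalIntegrable (by fun_prop) _ _),
    integral_cos_two_pi_int_mul, integral_cos_two_pi_int_mul]
  have hsum : (m + m' : ℤ) ≠ 0 := by omega
  simp only [sub_eq_zero, Nat.cast_inj, hsum, if_false, add_zero]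
  split_ifs <;> norm_num

lemma integral_sq_sum_mul_cos_two_pi_nat_mul {ι : Type*} (s : Finset ι) (c : ι → ℝ)
    (m : ι → ℕ) (hm : ∀ k ∈ s, 0 < m k) (hinj : Set.InjOn m s) :
    ∫ u in (0:ℝ)..1, (∑ k ∈ s, c k * cos (2 * π * m k * u)) ^ 2 = (∑ k ∈ s, c k ^ 2) / 2 := by
  classical
  have hterm : ∀ k ∈ s, ∀ l ∈ s, ∫ u in (0:ℝ)..1,
      c k * cos (2 * π * m k * u) * (c l * cos (2 * π * m l * u)) =
        if k = l then c k ^ 2 / 2 else 0 := by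
    intro k hk l hl
    simp only [mul_mul_mul_comm (c k), intervalIntegral.integral_const_mul,
      integral_cos_mul_cos_two_pi_nat_mul (hm k hk) (hm l hl), hinj.eq_iff hk hl]
    split_ifs with hkl
    · subst hkl; ring
    · ring
  simp only [sq, sum_mul_sum]
  rw [intervalIntegral.integral_finsetSum
      fun k _ => Continuous.intervalIntegrable (by fun_prop) _ _, sum_div]
  refine sum_congr rfl fun k hk => ?_
  rw [intervalIntegral.integral_finsetSum
      fun l _ => Continuous.intervalIntegrable (by fun_prop) _ _,
    sum_congr rfl (hterm k hk), sum_ite_eq, if_pos hk, sq]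

theorem stmt6_general (a : ℕ → ℝ) (jk : ℕ → ℕ) (hjk : ∀ k, 0 < jk k)
    (y x : ℕ)
    (hinj : Set.InjOn jk (Finset.Icc y x : Set ℕ)) (n : ℕ) :
    (1 / ∑ k ∈ Finset.Icc y x, a k ^ 2) * ∑ j ∈ Finset.range n,
        |∑ k ∈ Finset.Icc y x, a k ^ 2 * Real.cos (2 * π * jk k * ((j:ℝ) / n))|
      ≤ (1 / ∑ k ∈ Finset.Icc y x, a k ^ 2) *
          ((n:ℝ) * Real.sqrt (∑ k ∈ Finset.Icc y x, a k ^ 4)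
            + 2 * π * ∑ k ∈ Finset.Icc y x, (jk k : ℝ) * a k ^ 2) := by
  set F := Finset.Icc y x
  set f : ℝ → ℝ := fun u => ∑ k ∈ F, a k ^ 2 * cos (2 * π * jk k * u)
  have hlip := lipschitzWith_one_norm.comp
    (lipschitzWith_sum_mul_cos F (fun k => a k ^ 2) fun k => 2 * π * jk k)
  have hK : ((1 * ∑ k ∈ F, ‖a k ^ 2‖₊ * ‖2 * π * jk k‖₊ : ℝ≥0) : ℝ) =
      2 * π * ∑ k ∈ F, (jk k : ℝ) * a k ^ 2 := by
    push_cast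
    rw [one_mul, mul_sum]
    refine sum_congr rfl fun k _ => ?_
    simp [abs_of_nonneg pi_pos.le]
    ring
  have hriemann := sum_le_mul_integral_add_of_lipschitzWith hlip n
  simp only [hK, Function.comp_apply, Real.norm_eq_abs] at hriemann
  have hL1 : ∫ u in (0:ℝ)..1, |f u| ≤ √(∑ k ∈ F, a k ^ 4) := calc
    _ ≤ √(∫ u in (0:ℝ)..1, f u ^ 2) := integral_abs_le_sqrt_integral_sq (by fun_prop)
    _ = √((∑ k ∈ F, (a k ^ 2) ^ 2) / 2) := by
        rw [integral_sq_sum_mul_cos_two_pi_nat_mul F _ jk (fun k _ => hjk k) hinj]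
    _ ≤ √(∑ k ∈ F, a k ^ 4) := by
        simp only [← pow_mul, Nat.reduceMul]
        exact sqrt_le_sqrt (half_le_self (by positivity))
  gcongr
  calc _ ≤ n * (∫ u in (0:ℝ)..1, |f u|) + 2 * π * ∑ k ∈ F, (jk k : ℝ) * a k ^ 2 := hriemann
    _ ≤ _ := by gcongr

theorem stmt6 (a : ℕ → ℝ) (jk : ℕ → ℕ) (hjk : ∀ k, 0 < jk k)
    (y x : ℕ) (hy : 1 ≤ y) (hyx : y ≤ x)
    (hinj : Set.InjOn jk (Finset.Icc y x : Set ℕ))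
    (hA : 0 < ∑ k ∈ Finset.Icc y x, a k ^ 2) (n : ℕ) (hn : 0 < n) :
    (1 / ∑ k ∈ Finset.Icc y x, a k ^ 2) * ∑ j ∈ Finset.range n,
        |∑ k ∈ Finset.Icc y x, a k ^ 2 * Real.cos (2 * π * jk k * ((j:ℝ) / n))|
      ≤ (1 / ∑ k ∈ Finset.Icc y x, a k ^ 2) *
          ((n:ℝ) * Real.sqrt (∑ k ∈ Finset.Icc y x, a k ^ 4)
            + 2 * π * ∑ k ∈ Finset.Icc y x, (jk k : ℝ) * a k ^ 2) :=
  stmt6_general a jk hjk y x hinj n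
end

section
/- If n ≥ 2π ∑_{y ≤ k ≤ x} j_k a_k², then n / p_{y,x}(n) ≥ A(y,x) / ((∑_{y ≤ k ≤ x} a_k⁴)^{1/2} + 1), where p_{y,x}(n) and A(y,x) are as defined from coefficients (a_k) (not all zero) and distinct positive integer frequencies (j_k). -/
open Real


private lemma my_sum_cos_zero {N : ℕ} (hN : 0 < N) {q : ℤ} (hq : ¬ (N:ℤ) ∣ q) :
    ∑ i ∈ Finset.range N, Real.cos (2 * π * q * i / N) = 0 := by
  have hNR : (N : ℝ) ≠ 0 := Nat.cast_ne_zero.2 hN.ne'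
  set z : ℂ := Complex.exp (2 * π * q / N * Complex.I) with hz
  have hz1 : z ≠ 1 := by
    intro h
    rw [hz, Complex.exp_eq_one_iff] at h
    obtain ⟨m, hm⟩ := h
    apply hq
    refine ⟨m, ?_⟩
    rw [mul_comm]
    have hI : (Complex.I : ℂ) ≠ 0 := Complex.I_ne_zero
    have hπ : (π : ℂ) ≠ 0 := Complex.ofReal_ne_zero.2 Real.pi_ne_zero
    have hNC : (N : ℂ) ≠ 0 := Nat.cast_ne_zero.2 hN.ne'
    have : (q : ℂ) = m * N := by
      field_simp at hm
      have h2 : (2:ℂ) * π * Complex.I ≠ 0 := by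
        simp [Real.pi_ne_zero, Complex.I_ne_zero, Complex.ofReal_ne_zero]
      have : (2:ℂ) * π * Complex.I * q = 2 * π * Complex.I * (m * N) := by
        rw [show (2:ℂ) * ↑π * Complex.I * ↑q = 2 * ↑π * ↑q * Complex.I by ring, hm]; ring
      exact mul_left_cancel₀ h2 this
    exact_mod_cast this
  have hzN : z ^ N = 1 := by
    rw [hz, ← Complex.exp_nat_mul]
    have : (N : ℂ) * (2 * π * q / N * Complex.I) = q * (2 * π * Complex.I) := by
      have hNC : (N : ℂ) ≠ 0 := Nat.cast_ne_zero.2 hN.ne'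
      field_simp
    rw [this]
    exact_mod_cast Complex.exp_int_mul_two_pi_mul_I q
  have hsum : ∑ i ∈ Finset.range N, z ^ i = 0 := by
    rw [geom_sum_eq hz1, hzN]
    simp
  have hre : ∀ i : ℕ, (z ^ i).re = Real.cos (2 * π * q * i / N) := by
    intro i
    rw [hz, ← Complex.exp_nat_mul]
    have : (i : ℂ) * (2 * π * q / N * Complex.I) = ((2 * π * q * i / N : ℝ) : ℂ) * Complex.I := by
      push_cast; ring
    rw [this, Complex.exp_ofReal_mul_I_re]
  calc ∑ i ∈ Finset.range N, Real.cos (2 * π * q * i / N)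
      = (∑ i ∈ Finset.range N, z ^ i).re := by
        rw [Complex.re_sum]; exact Finset.sum_congr rfl fun i _ => (hre i).symm
    _ = 0 := by rw [hsum]; rfl


private lemma my_abs_sin_le_aux {x : ℝ} (h : 0 ≤ x) : |Real.sin x| ≤ x := by
  rcases le_or_gt 1 x with h1 | h1
  · exact (abs_le.2 ⟨Real.neg_one_le_sin _, Real.sin_le_one _⟩).trans h1
  · have hπ : x ≤ π := h1.le.trans (by linarith [Real.pi_gt_three])
    rw [abs_of_nonneg (Real.sin_nonneg_of_nonneg_of_le_pi h hπ)]
    exact Real.sin_le h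

private lemma my_abs_sin_le (x : ℝ) : |Real.sin x| ≤ |x| := by
  rcases le_or_gt 0 x with h | h
  · rw [abs_of_nonneg h]; exact my_abs_sin_le_aux h
  · have h' : 0 ≤ -x := by linarith
    have := my_abs_sin_le_aux h'
    rw [Real.sin_neg, abs_neg] at this
    rw [abs_of_neg h]
    exact this

private lemma my_cos_lip (u v : ℝ) : |Real.cos u - Real.cos v| ≤ |u - v| := by
  rw [Real.cos_sub_cos]
  have h1 := my_abs_sin_le ((u - v) / 2)
  have h2 : |Real.sin ((u + v) / 2)| ≤ 1 := abs_le.2 ⟨Real.neg_one_le_sin _, Real.sin_le_one _⟩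
  have h3 : |(-2 : ℝ) * Real.sin ((u + v) / 2) * Real.sin ((u - v) / 2)|
      = 2 * (|Real.sin ((u + v) / 2)| * |Real.sin ((u - v) / 2)|) := by
    rw [abs_mul, abs_mul]; norm_num; ring
  rw [h3]
  have h4 : |Real.sin ((u + v) / 2)| * |Real.sin ((u - v) / 2)| ≤ 1 * |(u - v) / 2| :=
    mul_le_mul h2 h1 (abs_nonneg _) zero_le_one
  rw [abs_div] at h4
  have h5 : |(2:ℝ)| = 2 := by norm_num
  rw [h5] at h4
  nlinarith [abs_nonneg (u - v)]


private lemma my_not_dvd {N : ℕ} {q : ℤ} (h0 : q ≠ 0) (h : |q| < N) : ¬(N:ℤ) ∣ q := by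
  intro hd
  have h1 : (N:ℤ) ≤ |q| := Int.le_of_dvd (abs_pos.2 h0) ((dvd_abs _ _).2 hd)
  linarith


private lemma my_coscos {N m m' : ℕ} (hm : 0 < m) (hm' : 0 < m') (hlt : m + m' < N) :
    ∑ i ∈ Finset.range N,
        Real.cos (2 * π * m * ((i:ℝ) / N)) * Real.cos (2 * π * m' * ((i:ℝ) / N))
      = if m = m' then (N:ℝ) / 2 else 0 := by
  have hN : 0 < N := lt_of_le_of_lt (Nat.zero_le _) hlt
  have key : ∀ i ∈ Finset.range N,
      Real.cos (2 * π * m * ((i:ℝ) / N)) * Real.cos (2 * π * m' * ((i:ℝ) / N))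
        = (Real.cos (2 * π * (((m:ℤ) - (m':ℤ)):ℝ) * i / N)
            + Real.cos (2 * π * (((m:ℤ) + (m':ℤ)):ℝ) * i / N)) / 2 := by
    intro i _
    have h := Real.two_mul_cos_mul_cos (2 * π * m * ((i:ℝ) / N)) (2 * π * m' * ((i:ℝ) / N))
    have e1 : 2 * π * m * ((i:ℝ) / N) - 2 * π * m' * ((i:ℝ) / N)
        = 2 * π * (((m:ℤ) - (m':ℤ)):ℝ) * i / N := by push_cast; ring
    have e2 : 2 * π * m * ((i:ℝ) / N) + 2 * π * m' * ((i:ℝ) / N)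
        = 2 * π * (((m:ℤ) + (m':ℤ)):ℝ) * i / N := by push_cast; ring
    rw [e1, e2] at h
    linarith
  rw [Finset.sum_congr rfl key, ← Finset.sum_div, Finset.sum_add_distrib]
  have hsum2 : ∑ i ∈ Finset.range N, Real.cos (2 * π * (((m:ℤ) + (m':ℤ)):ℝ) * i / N) = 0 := by
    exact_mod_cast my_sum_cos_zero hN (my_not_dvd (by positivity)
      (by rw [abs_of_pos (by positivity)]; exact_mod_cast hlt))
  rw [hsum2]
  by_cases h : m = m'
  · subst h
    simp only [if_pos rfl, sub_self]
    norm_num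
  · rw [if_neg h]
    have hq0 : (m:ℤ) - (m':ℤ) ≠ 0 := by
      intro hc; apply h; omega
    have habs : |(m:ℤ) - (m':ℤ)| < N := by
      rw [abs_sub_lt_iff]; constructor <;> [omega; omega]
    have hnd : ¬ (N:ℤ) ∣ ((m:ℤ) - (m':ℤ)) := my_not_dvd hq0 habs
    have hsum1 := my_sum_cos_zero hN hnd
    push_cast at hsum1 ⊢
    rw [hsum1]
    simp




private lemma my_flat (g : ℕ → ℝ) (n M : ℕ) :
    ∑ i ∈ Finset.range (n * M), g i
      = ∑ j ∈ Finset.range n, ∑ t ∈ Finset.range M, g (j * M + t) := by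
  induction n with
  | zero => simp
  | succ n ih => rw [Nat.succ_mul, Finset.sum_range_add, ih, Finset.sum_range_succ]

theorem stmt7 (a : ℕ → ℝ) (jk : ℕ → ℕ) (hjk : ∀ k, 0 < jk k)
    (y x : ℕ) (hy : 1 ≤ y) (hyx : y ≤ x)
    (hinj : Set.InjOn jk (Finset.Icc y x : Set ℕ))
    (hA : 0 < ∑ k ∈ Finset.Icc y x, a k ^ 2) (n : ℕ)
    (hn : 2 * π * ∑ k ∈ Finset.Icc y x, (jk k : ℝ) * a k ^ 2 ≤ (n:ℝ)) :
    ((∑ k ∈ Finset.Icc y x, a k ^ 2) /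
        (Real.sqrt (∑ k ∈ Finset.Icc y x, a k ^ 4) + 1)) *
      ((1 / ∑ k ∈ Finset.Icc y x, a k ^ 2) * ∑ j ∈ Finset.range n,
        |∑ k ∈ Finset.Icc y x, a k ^ 2 * Real.cos (2 * π * jk k * ((j:ℝ) / n))|)
      ≤ (n:ℝ) := by
  classical
  set A : ℝ := ∑ k ∈ Finset.Icc y x, a k ^ 2 with hAdef
  set S : ℝ := ∑ k ∈ Finset.Icc y x, a k ^ 4 with hSdef
  set L : ℝ := 2 * π * ∑ k ∈ Finset.Icc y x, (jk k : ℝ) * a k ^ 2 with hLdef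
  have hS0 : 0 ≤ S := Finset.sum_nonneg fun k _ => by positivity
  have hJA : A ≤ ∑ k ∈ Finset.Icc y x, (jk k : ℝ) * a k ^ 2 := by
    apply Finset.sum_le_sum
    intro k _
    have h1 : (1:ℝ) ≤ (jk k : ℝ) := by exact_mod_cast hjk k
    nlinarith [sq_nonneg (a k)]
  have hL0 : 0 < L := by
    rw [hLdef]
    have := pi_pos
    nlinarith
  have hn0 : 0 < n := by
    by_contra h
    push_neg at h
    interval_cases n
    simp at hn
    linarith
  have hnR : (0:ℝ) < n := by exact_mod_cast hn0
  -- F : the trig polynomial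
  set F : ℝ → ℝ := fun t => ∑ k ∈ Finset.Icc y x, a k ^ 2 * Real.cos (2 * π * jk k * t)
    with hFdef
  -- Lipschitz bound
  have hLip : ∀ s t : ℝ, |F s - F t| ≤ L * |s - t| := by
    intro s t
    rw [hFdef]
    simp only
    rw [← Finset.sum_sub_distrib]
    refine (Finset.abs_sum_le_sum_abs _ _).trans ?_
    have heq : L * |s - t| = ∑ k ∈ Finset.Icc y x,
        a k ^ 2 * (2 * π * jk k * |s - t|) := by
      rw [hLdef, Finset.mul_sum, Finset.sum_mul]
      exact Finset.sum_congr rfl fun k _ => by ring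
    rw [heq]
    apply Finset.sum_le_sum
    intro k _
    have e1 : a k ^ 2 * Real.cos (2 * π * jk k * s) - a k ^ 2 * Real.cos (2 * π * jk k * t)
        = a k ^ 2 * (Real.cos (2 * π * jk k * s) - Real.cos (2 * π * jk k * t)) := by ring
    rw [e1, abs_mul, abs_of_nonneg (sq_nonneg (a k))]
    have h2 := my_cos_lip (2 * π * jk k * s) (2 * π * jk k * t)
    have h3 : |2 * π * (jk k : ℝ) * s - 2 * π * (jk k : ℝ) * t| = 2 * π * (jk k : ℝ) * |s - t| := by
      rw [← mul_sub, abs_mul, abs_of_nonneg (by positivity : (0:ℝ) ≤ 2 * π * (jk k : ℝ))]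
    rw [h3] at h2
    exact mul_le_mul_of_nonneg_left h2 (sq_nonneg (a k))
  -- the fine grid
  set J : ℕ := (Finset.Icc y x).sup jk with hJdef
  set M : ℕ := 2 * J + 1 with hMdef
  set N : ℕ := n * M with hNdef
  have hM0 : 0 < M := by omega
  have hN0 : 0 < N := Nat.mul_pos hn0 hM0
  have hMR : (0:ℝ) < M := by exact_mod_cast hM0
  have hNR : (0:ℝ) < N := by exact_mod_cast hN0
  have hsumlt : ∀ k ∈ Finset.Icc y x, ∀ l ∈ Finset.Icc y x, jk k + jk l < N := by
    intro k hk l hl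
    have h1 : jk k ≤ J := Finset.le_sup hk
    have h2 : jk l ≤ J := Finset.le_sup hl
    have : M ≤ N := Nat.le_mul_of_pos_left M hn0
    omega
  -- second moment on fine grid
  have hsq : ∑ i ∈ Finset.range N, (F ((i:ℝ) / N)) ^ 2 = (N:ℝ) / 2 * S := by
    have expand : ∀ i : ℕ, (F ((i:ℝ) / N)) ^ 2
        = ∑ k ∈ Finset.Icc y x, ∑ l ∈ Finset.Icc y x, (a k ^ 2 * a l ^ 2) *
            (Real.cos (2 * π * jk k * ((i:ℝ) / N)) * Real.cos (2 * π * jk l * ((i:ℝ) / N))) := by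
      intro i
      rw [hFdef]
      simp only
      rw [sq, Finset.sum_mul_sum]
      exact Finset.sum_congr rfl fun k _ => Finset.sum_congr rfl fun l _ => by ring
    calc ∑ i ∈ Finset.range N, (F ((i:ℝ) / N)) ^ 2
        = ∑ k ∈ Finset.Icc y x, ∑ l ∈ Finset.Icc y x, (a k ^ 2 * a l ^ 2) *
            ∑ i ∈ Finset.range N,
              Real.cos (2 * π * jk k * ((i:ℝ) / N)) * Real.cos (2 * π * jk l * ((i:ℝ) / N)) := by
          rw [Finset.sum_congr rfl fun i _ => expand i, Finset.sum_comm]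
          refine Finset.sum_congr rfl fun k _ => ?_
          rw [Finset.sum_comm]
          refine Finset.sum_congr rfl fun l _ => ?_
          rw [Finset.mul_sum]
      _ = ∑ k ∈ Finset.Icc y x, ∑ l ∈ Finset.Icc y x, (a k ^ 2 * a l ^ 2) *
            (if jk k = jk l then (N:ℝ) / 2 else 0) := by
          refine Finset.sum_congr rfl fun k hk => Finset.sum_congr rfl fun l hl => ?_
          rw [my_coscos (hjk k) (hjk l) (hsumlt k hk l hl)]
      _ = ∑ k ∈ Finset.Icc y x, a k ^ 4 * ((N:ℝ) / 2) := by
          refine Finset.sum_congr rfl fun k hk => ?_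
          rw [Finset.sum_eq_single k]
          · rw [if_pos rfl]; ring
          · intro l hl hlk
            have hne : jk k ≠ jk l := fun h =>
              hlk (hinj (Finset.mem_coe.mpr hl) (Finset.mem_coe.mpr hk) h.symm)
            rw [if_neg hne, mul_zero]
          · intro h; exact absurd hk h
      _ = (N:ℝ) / 2 * S := by rw [hSdef, ← Finset.sum_mul]; ring
  -- Cauchy–Schwarz on the fine grid
  have hCS : ∑ i ∈ Finset.range N, |F ((i:ℝ)/N)| ≤ (N:ℝ) * Real.sqrt S := by
    have h1 : (∑ i ∈ Finset.range N, |F ((i:ℝ)/N)| * 1) ^ 2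
        ≤ (∑ i ∈ Finset.range N, |F ((i:ℝ)/N)| ^ 2) * ∑ i ∈ Finset.range N, (1:ℝ) ^ 2 :=
      Finset.sum_mul_sq_le_sq_mul_sq _ _ _
    simp only [mul_one, one_pow, Finset.sum_const, Finset.card_range, nsmul_eq_mul, sq_abs] at h1
    rw [hsq] at h1
    have h2 : (∑ i ∈ Finset.range N, |F ((i:ℝ)/N)|) ^ 2 ≤ ((N:ℝ) * Real.sqrt S) ^ 2 := by
      have e : ((N:ℝ) * Real.sqrt S) ^ 2 = (N:ℝ) ^ 2 * S := by
        rw [mul_pow, Real.sq_sqrt hS0]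
      rw [e]
      nlinarith [hNR]
    exact (abs_le_of_sq_le_sq' h2 (by positivity)).2
  -- grid comparison
  have hgrid : ∀ j ∈ Finset.range n, ∀ t ∈ Finset.range M,
      |F ((j:ℝ)/n)| ≤ |F (((j*M+t : ℕ):ℝ)/N)| + L * ((M:ℝ)/N) := by
    intro j hj t ht
    have hNe : (N:ℝ) = (n:ℝ) * (M:ℝ) := by rw [hNdef]; push_cast; ring
    have hd : |F ((j:ℝ)/n) - F (((j*M+t:ℕ):ℝ)/N)| ≤ L * ((M:ℝ)/N) := by
      have h1 := hLip ((j:ℝ)/n) (((j*M+t:ℕ):ℝ)/N)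
      have h2 : |(j:ℝ)/n - ((j*M+t:ℕ):ℝ)/N| ≤ (M:ℝ)/N := by
        have e : (j:ℝ)/n - ((j*M+t:ℕ):ℝ)/N = -((t:ℝ) / N) := by
          push_cast
          rw [hNe]
          field_simp
          push_cast
          ring
        rw [e, abs_neg, abs_of_nonneg (by positivity)]
        have ht' : (t:ℝ) ≤ (M:ℝ) := le_of_lt (by exact_mod_cast Finset.mem_range.mp ht)
        gcongr
      exact h1.trans (mul_le_mul_of_nonneg_left h2 hL0.le)
    have h3 := abs_sub_abs_le_abs_sub (F ((j:ℝ)/n)) (F (((j*M+t:ℕ):ℝ)/N))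
    linarith
  -- sum the grid comparison
  have hT : (M:ℝ) * (∑ j ∈ Finset.range n, |F ((j:ℝ)/n)|)
      ≤ (N:ℝ) * Real.sqrt S + (M:ℝ) * L := by
    have hNe : (N:ℝ) = (n:ℝ) * (M:ℝ) := by rw [hNdef]; push_cast; ring
    have hstep : ∀ j ∈ Finset.range n, (M:ℝ) * |F ((j:ℝ)/n)|
        ≤ (∑ t ∈ Finset.range M, |F (((j*M+t:ℕ):ℝ)/N)|) + (M:ℝ) * (L * ((M:ℝ)/N)) := by
      intro j hj
      calc (M:ℝ) * |F ((j:ℝ)/n)| = ∑ _t ∈ Finset.range M, |F ((j:ℝ)/n)| := by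
            rw [Finset.sum_const, Finset.card_range, nsmul_eq_mul]
        _ ≤ ∑ t ∈ Finset.range M, (|F (((j*M+t:ℕ):ℝ)/N)| + L * ((M:ℝ)/N)) :=
            Finset.sum_le_sum (fun t ht => hgrid j hj t ht)
        _ = (∑ t ∈ Finset.range M, |F (((j*M+t:ℕ):ℝ)/N)|) + (M:ℝ) * (L * ((M:ℝ)/N)) := by
            rw [Finset.sum_add_distrib, Finset.sum_const, Finset.card_range, nsmul_eq_mul]
    calc (M:ℝ) * (∑ j ∈ Finset.range n, |F ((j:ℝ)/n)|)
        = ∑ j ∈ Finset.range n, (M:ℝ) * |F ((j:ℝ)/n)| := Finset.mul_sum _ _ _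
      _ ≤ ∑ j ∈ Finset.range n, ((∑ t ∈ Finset.range M, |F (((j*M+t:ℕ):ℝ)/N)|)
            + (M:ℝ) * (L * ((M:ℝ)/N))) := Finset.sum_le_sum hstep
      _ = (∑ j ∈ Finset.range n, ∑ t ∈ Finset.range M, |F (((j*M+t:ℕ):ℝ)/N)|)
            + (n:ℝ) * ((M:ℝ) * (L * ((M:ℝ)/N))) := by
          rw [Finset.sum_add_distrib, Finset.sum_const, Finset.card_range, nsmul_eq_mul]
      _ = (∑ i ∈ Finset.range N, |F ((i:ℝ)/N)|) + (M:ℝ) * L := by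
          rw [hNdef, my_flat (fun i => |F ((i:ℝ)/N)|) n M]
          congr 1
          rw [hNe]
          field_simp
      _ ≤ (N:ℝ) * Real.sqrt S + (M:ℝ) * L := by linarith [hCS]
  -- conclude T ≤ n (√S + 1)
  have hNe : (N:ℝ) = (n:ℝ) * (M:ℝ) := by rw [hNdef]; push_cast; ring
  have hTle : ∑ j ∈ Finset.range n, |F ((j:ℝ)/n)| ≤ (n:ℝ) * (Real.sqrt S + 1) := by
    have h1 : (M:ℝ) * (∑ j ∈ Finset.range n, |F ((j:ℝ)/n)|)
        ≤ (M:ℝ) * ((n:ℝ) * Real.sqrt S + L) := by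
      have e : (N:ℝ) * Real.sqrt S + (M:ℝ) * L = (M:ℝ) * ((n:ℝ) * Real.sqrt S + L) := by
        rw [hNe]; ring
      linarith [hT, e.symm.le]
    have h2 : ∑ j ∈ Finset.range n, |F ((j:ℝ)/n)| ≤ (n:ℝ) * Real.sqrt S + L :=
      le_of_mul_le_mul_left h1 hMR
    have h3 : L ≤ (n:ℝ) := hn
    nlinarith
  have key : ∑ j ∈ Finset.range n,
      |∑ k ∈ Finset.Icc y x, a k ^ 2 * Real.cos (2 * π * jk k * ((j:ℝ) / n))|
        ≤ (n:ℝ) * (Real.sqrt S + 1) := hTle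
  have hS1 : (0:ℝ) < Real.sqrt S + 1 := by positivity
  have hrw : A / (Real.sqrt S + 1) * ((1/A) * ∑ j ∈ Finset.range n,
      |∑ k ∈ Finset.Icc y x, a k ^ 2 * Real.cos (2 * π * jk k * ((j:ℝ) / n))|)
        = (∑ j ∈ Finset.range n,
      |∑ k ∈ Finset.Icc y x, a k ^ 2 * Real.cos (2 * π * jk k * ((j:ℝ) / n))|)
          / (Real.sqrt S + 1) := by
    field_simp
  rw [hrw, div_le_iff₀ hS1]
  exact key
end
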